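/- arXiv:1302.4163 — 2 statements merged into one kernel-verified Lean document; each statement's English description precedes it below -/
import Mathlib

section
/- Every lattice L has a congruence-preserving extension K such that every compact congruence of K is principal, that is, Princ K = Conc K. -/
universe u v

/-- A congruence of a lattice: an equivalence relation compatible with join and meet. -/
structure LatticeCon' (L : Type u) [Lattice L] extends Setoid L where
  sup_comp : ∀ {a b c d : L}, r a b → r c d → r (a ⊔ c) (b ⊔ d)
  inf_comp : ∀ {a b c d : L}, r a b → r c d → r (a ⊓ c) (b ⊓ d)

namespace LatticeCon'

variable {L : Type u} [Lattice L]

theorem ext' {c d : LatticeCon' L} (h : ∀ a b, c.r a b ↔ d.r a b) : c = d := by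
  obtain ⟨cs, _, _⟩ := c
  obtain ⟨ds, _, _⟩ := d
  congr 1
  exact Setoid.ext h

/-- Congruences are ordered by inclusion of the underlying relations. -/
instance : PartialOrder (LatticeCon' L) where
  le c d := ∀ ⦃a b : L⦄, c.r a b → d.r a b
  le_refl c a b h := h
  le_trans c d e h1 h2 a b h := h2 (h1 h)
  le_antisymm c d h1 h2 := ext' fun a b => ⟨fun h => h1 h, fun h => h2 h⟩

instance : InfSet (LatticeCon' L) where
  sInf S :=
    { r := fun a b => ∀ c ∈ S, c.r a b
      iseqv := ⟨fun a c _ => c.iseqv.refl a,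
        fun h c hc => c.iseqv.symm (h c hc),
        fun h1 h2 c hc => c.iseqv.trans (h1 c hc) (h2 c hc)⟩
      sup_comp := fun h1 h2 c hc => c.sup_comp (h1 c hc) (h2 c hc)
      inf_comp := fun h1 h2 c hc => c.inf_comp (h1 c hc) (h2 c hc) }

/-- The congruence lattice `Con L`. -/
instance : CompleteLattice (LatticeCon' L) :=
  completeLatticeOfInf _ fun S =>
    ⟨fun c hc _ _ h => h c hc, fun c hc _ _ h d hd => hc hd h⟩

/-- A congruence is principal if it is the smallest congruence collapsing some pair. -/
def IsPrincipal (α : LatticeCon' L) : Prop :=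
  ∃ a b : L, α.r a b ∧ ∀ β : LatticeCon' L, β.r a b → α ≤ β

/-- `Princ L`: the order of principal congruences of `L`. -/
abbrev Princ (L : Type u) [Lattice L] := {α : LatticeCon' L // α.IsPrincipal}

/-- `Conc L`: the compact congruences of `L`. -/
abbrev Conc (L : Type u) [Lattice L] := {α : LatticeCon' L // IsCompactElement α}

end LatticeCon'

/-- The restriction of a congruence of `K` to `L` along a lattice homomorphism
`f : L → K` (for an injective `f`, this is the restriction to the sublattice `f(L)`). -/
def LatticeCon'.restrict {L : Type u} {K : Type v} [Lattice L] [Lattice K]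
    (f : LatticeHom L K) (γ : LatticeCon' K) : LatticeCon' L where
  r a b := γ.r (f a) (f b)
  iseqv := ⟨fun a => γ.iseqv.refl (f a), fun h => γ.iseqv.symm h,
    fun h1 h2 => γ.iseqv.trans h1 h2⟩
  sup_comp {a b c d} h1 h2 := by
    have := γ.sup_comp h1 h2
    rwa [← map_sup, ← map_sup] at this
  inf_comp {a b c d} h1 h2 := by
    have := γ.inf_comp h1 h2
    rwa [← map_inf, ← map_inf] at this

/-!
Schmidt's lattice `M₃⟨L⟩` of boolean triples contains `L` as its diagonal, and every congruence
of `M₃⟨L⟩` is determined coordinatewise by its restriction to the diagonal (coordinate `i` of a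
triple is recovered from it by a lattice polynomial, and a triple is a join of meets of diagonal
elements with constants). Hence the diagonal is a congruence-preserving embedding, and in
`M₃⟨L⟩` the single pair `((a, c, a ⊓ c), (b, d, b ⊓ d))` generates `con(a, b) ⊔ con(c, d)`.
Iterating `L ↦ M₃⟨L⟩` and passing to the direct limit `K`, any two pairs of `K` already live in
some stage, so the join of two principal congruences of `K` is principal. A compact congruence
is a directed join of the principal congruences below it, so it is one of them.
-/

namespace LatticeCon'

variable {M : Type u} [Lattice M]

theorem rel_refl (Θ : LatticeCon' M) (a : M) : Θ.r a a := Θ.iseqv.refl a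

theorem rel_of_subsingleton [Subsingleton M] (Θ : LatticeCon' M) (a b : M) : Θ.r a b :=
  Subsingleton.elim a b ▸ Θ.rel_refl a

instance [Subsingleton M] : Subsingleton (LatticeCon' M) :=
  ⟨fun Θ Ψ => ext' fun a b => iff_of_true (Θ.rel_of_subsingleton a b) (Ψ.rel_of_subsingleton a b)⟩

theorem restrict_r {N : Type*} [Lattice N] (f : LatticeHom M N) (Θ : LatticeCon' N) {a b : M} :
    (restrict f Θ).r a b ↔ Θ.r (f a) (f b) :=
  Iff.rfl

theorem restrict_id (Θ : LatticeCon' M) : restrict (LatticeHom.id M) Θ = Θ := rfl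

theorem restrict_comp {N P : Type*} [Lattice N] [Lattice P] (g : LatticeHom N P)
    (f : LatticeHom M N) (Θ : LatticeCon' P) : restrict (g.comp f) Θ = restrict f (restrict g Θ) :=
  rfl

def ofSetoid (s : Setoid M) (sup_right : ∀ {a b} c, s.r a b → s.r (a ⊔ c) (b ⊔ c))
    (inf_right : ∀ {a b} c, s.r a b → s.r (a ⊓ c) (b ⊓ c)) : LatticeCon' M where
  toSetoid := s
  sup_comp {a b c d} hab hcd := s.iseqv.trans (sup_right c hab) <| by
    simpa only [sup_comm b] using sup_right b hcd
  inf_comp {a b c d} hab hcd := s.iseqv.trans (inf_right c hab) <| by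
    simpa only [inf_comm b] using inf_right b hcd

def principal (a b : M) : LatticeCon' M := sInf {Θ | Θ.r a b}

theorem rel_principal (a b : M) : (principal a b).r a b := fun _ hΘ => hΘ

theorem principal_le {a b : M} {Θ : LatticeCon' M} (h : Θ.r a b) : principal a b ≤ Θ :=
  fun _ _ hxy => hxy Θ h

theorem isPrincipal_principal (a b : M) : (principal a b).IsPrincipal :=
  ⟨a, b, rel_principal a b, fun _ => principal_le⟩

theorem exists_rel_of_rel_sSup {s : Set (LatticeCon' M)} (hne : s.Nonempty)
    (hdir : DirectedOn (· ≤ ·) s) {a b : M} (h : (sSup s).r a b) : ∃ Θ ∈ s, Θ.r a b := by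
  let union : LatticeCon' M :=
    { r := fun x y => ∃ Θ ∈ s, Θ.r x y
      iseqv :=
        { refl := fun x => hne.imp fun Θ hΘ => ⟨hΘ, Θ.rel_refl x⟩
          symm := fun ⟨Θ, hΘ, hxy⟩ => ⟨Θ, hΘ, Θ.iseqv.symm hxy⟩
          trans := fun ⟨Θ, hΘ, hxy⟩ ⟨Ψ, hΨ, hyz⟩ =>
            let ⟨Φ, hΦ, hΘΦ, hΨΦ⟩ := hdir Θ hΘ Ψ hΨ
            ⟨Φ, hΦ, Φ.iseqv.trans (hΘΦ hxy) (hΨΦ hyz)⟩ }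
      sup_comp := fun ⟨Θ, hΘ, hab⟩ ⟨Ψ, hΨ, hcd⟩ =>
        let ⟨Φ, hΦ, hΘΦ, hΨΦ⟩ := hdir Θ hΘ Ψ hΨ
        ⟨Φ, hΦ, Φ.sup_comp (hΘΦ hab) (hΨΦ hcd)⟩
      inf_comp := fun ⟨Θ, hΘ, hab⟩ ⟨Ψ, hΨ, hcd⟩ =>
        let ⟨Φ, hΦ, hΘΦ, hΨΦ⟩ := hdir Θ hΘ Ψ hΨ
        ⟨Φ, hΦ, Φ.inf_comp (hΘΦ hab) (hΨΦ hcd)⟩ }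
  exact sSup_le (s := s) (a := union) (fun Θ hΘ _ _ hxy => ⟨Θ, hΘ, hxy⟩) h

theorem IsPrincipal.isCompactElement {γ : LatticeCon' M} (hγ : γ.IsPrincipal) :
    IsCompactElement γ := by
  obtain ⟨a, b, hab, hmin⟩ := hγ
  refine (CompleteLattice.isCompactElement_iff_le_of_directed_sSup_le _ γ).2 ?_
  intro s hne hdir hle
  obtain ⟨Θ, hΘ, hΘab⟩ := exists_rel_of_rel_sSup hne hdir (hle hab)
  exact ⟨Θ, hΘ, hmin Θ hΘab⟩

/-- `con(x, y) = con(a, b) ⊔ con(c, d)`: joins of principal congruences are principal. -/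
def HasPairJoins (M : Type u) [Lattice M] : Prop :=
  ∀ a b c d : M, ∃ x y : M, ∀ Θ : LatticeCon' M, Θ.r x y ↔ Θ.r a b ∧ Θ.r c d

theorem hasPairJoins_of_subsingleton [Subsingleton M] : HasPairJoins M :=
  fun a b c d => ⟨a, a, fun Θ =>
    iff_of_true (Θ.rel_refl a) ⟨Θ.rel_of_subsingleton a b, Θ.rel_of_subsingleton c d⟩⟩

theorem isPrincipal_iff_isCompactElement [Nonempty M] (hM : HasPairJoins M)
    {γ : LatticeCon' M} : γ.IsPrincipal ↔ IsCompactElement γ := by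
  refine ⟨IsPrincipal.isCompactElement, fun hγ => ?_⟩
  let s := {β : LatticeCon' M | β.IsPrincipal ∧ β ≤ γ}
  have hne : s.Nonempty := by
    obtain ⟨a⟩ := ‹Nonempty M›
    exact ⟨principal a a, isPrincipal_principal a a, principal_le (γ.rel_refl a)⟩
  have hdir : DirectedOn (· ≤ ·) s := by
    rintro β ⟨⟨a, b, hab, hβ⟩, hβγ⟩ β' ⟨⟨c, d, hcd, hβ'⟩, hβ'γ⟩
    obtain ⟨x, y, hxy⟩ := hM a b c d
    have hγxy : γ.r x y := (hxy γ).2 ⟨hβγ hab, hβ'γ hcd⟩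
    refine ⟨principal x y, ⟨isPrincipal_principal x y, principal_le hγxy⟩, ?_, ?_⟩
    · exact hβ _ ((hxy _).1 (rel_principal x y)).1
    · exact hβ' _ ((hxy _).1 (rel_principal x y)).2
  have hle : γ ≤ sSup s := fun a b hab =>
    le_sSup (show principal a b ∈ s from ⟨isPrincipal_principal a b, principal_le hab⟩)
      (rel_principal a b)
  obtain ⟨β, ⟨hβ, hβγ⟩, hγβ⟩ :=
    (CompleteLattice.isCompactElement_iff_le_of_directed_sSup_le _ γ).1 hγ s hne hdir hle
  rwa [le_antisymm hγβ hβγ]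

end LatticeCon'

namespace DirectLimit

variable {ι : Type*} [Preorder ι] [IsDirectedOrder ι] {F : ι → Type u} [∀ i, Lattice (F i)]
  (f : ∀ i j, i ≤ j → LatticeHom (F i) (F j)) [DirectedSystem F (f · · ·)]

noncomputable instance instMax : Max (DirectLimit F f) where
  max := map₂ f f f (fun _ => (· ⊔ ·)) fun _ _ _ => map_sup _

noncomputable instance instMin : Min (DirectLimit F f) where
  min := map₂ f f f (fun _ => (· ⊓ ·)) fun _ _ _ => map_inf _

theorem mk_sup_mk (i : ι) (x y : F i) :
    (⟦⟨i, x⟩⟧ ⊔ ⟦⟨i, y⟩⟧ : DirectLimit F f) = ⟦⟨i, x ⊔ y⟩⟧ :=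
  map₂_def ..

theorem mk_inf_mk (i : ι) (x y : F i) :
    (⟦⟨i, x⟩⟧ ⊓ ⟦⟨i, y⟩⟧ : DirectLimit F f) = ⟦⟨i, x ⊓ y⟩⟧ :=
  map₂_def ..

noncomputable instance instLattice : Lattice (DirectLimit F f) :=
  Lattice.mk'
    (DirectLimit.induction₂ _ fun i x y => by simp only [mk_sup_mk, sup_comm])
    (DirectLimit.induction₃ _ fun i x y z => by simp only [mk_sup_mk, sup_assoc])
    (DirectLimit.induction₂ _ fun i x y => by simp only [mk_inf_mk, inf_comm])
    (DirectLimit.induction₃ _ fun i x y z => by simp only [mk_inf_mk, inf_assoc])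
    (DirectLimit.induction₂ _ fun i x y => by simp only [mk_sup_mk, mk_inf_mk, sup_inf_self])
    (DirectLimit.induction₂ _ fun i x y => by simp only [mk_sup_mk, mk_inf_mk, inf_sup_self])

noncomputable def latticeHom (i : ι) : LatticeHom (F i) (DirectLimit F f) where
  toFun x := ⟦⟨i, x⟩⟧
  map_sup' x y := (mk_sup_mk f i x y).symm
  map_inf' x y := (mk_inf_mk f i x y).symm

theorem latticeHom_apply (i : ι) (x : F i) : latticeHom f i x = ⟦⟨i, x⟩⟧ := rfl

theorem latticeHom_injective (hf : ∀ i j h, Function.Injective (f i j h)) (i : ι) :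
    Function.Injective (latticeHom f i) :=
  mk_injective f hf i

theorem latticeCon_ext {Θ Ψ : LatticeCon' (DirectLimit F f)}
    (h : ∀ i, LatticeCon'.restrict (latticeHom f i) Θ = LatticeCon'.restrict (latticeHom f i) Ψ) :
    Θ = Ψ :=
  LatticeCon'.ext' <| DirectLimit.induction₂ _ fun i x y =>
    Iff.of_eq (congrArg (fun Φ : LatticeCon' (F i) => Φ.r x y) (h i))

noncomputable def latticeCon (Θ : ∀ i, LatticeCon' (F i))
    (hΘ : ∀ i j (h : i ≤ j), LatticeCon'.restrict (f i j h) (Θ j) = Θ i) :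
    LatticeCon' (DirectLimit F f) :=
  .ofSetoid
    { r := DirectLimit.lift₂ f f (fun i x y => (Θ i).r x y) fun i j h _ _ => by
        rw [← hΘ i j h]; rfl
      iseqv :=
        { refl := DirectLimit.induction _ fun i x =>
            (Iff.of_eq (lift₂_def ..)).2 ((Θ i).rel_refl x)
          symm := fun {a b} => by
            obtain ⟨i, x, y, rfl, rfl⟩ := exists_eq_mk₂ f a b
            simp only [lift₂_def]; exact (Θ i).iseqv.symm
          trans := fun {a b c} => by
            obtain ⟨i, x, y, z, rfl, rfl, rfl⟩ := exists_eq_mk₃ f a b c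
            simp only [lift₂_def]; exact (Θ i).iseqv.trans } }
    (fun {a b} c => by
      obtain ⟨i, x, y, z, rfl, rfl, rfl⟩ := exists_eq_mk₃ f a b c
      simp only [mk_sup_mk, lift₂_def]
      exact fun h => (Θ i).sup_comp h ((Θ i).rel_refl z))
    (fun {a b} c => by
      obtain ⟨i, x, y, z, rfl, rfl, rfl⟩ := exists_eq_mk₃ f a b c
      simp only [mk_inf_mk, lift₂_def]
      exact fun h => (Θ i).inf_comp h ((Θ i).rel_refl z))

theorem restrict_latticeCon (Θ : ∀ i, LatticeCon' (F i))
    (hΘ : ∀ i j (h : i ≤ j), LatticeCon'.restrict (f i j h) (Θ j) = Θ i) (i : ι) :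
    LatticeCon'.restrict (latticeHom f i) (latticeCon f Θ hΘ) = Θ i :=
  LatticeCon'.ext' fun _ _ => Iff.of_eq (lift₂_def ..)

end DirectLimit

namespace LatticeHom

variable {F : ℕ → Type u} [∀ n, Lattice (F n)] (e : ∀ n, LatticeHom (F n) (F (n + 1)))

def chain (m n : ℕ) (h : m ≤ n) : LatticeHom (F m) (F n) :=
  Nat.leRecOn h (fun {k} g => (e k).comp g) (LatticeHom.id _)

theorem chain_self (n : ℕ) : chain e n n le_rfl = LatticeHom.id _ :=
  Nat.leRecOn_self _

theorem chain_succ {m n : ℕ} (h : m ≤ n) :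
    chain e m (n + 1) (h.trans n.le_succ) = (e n).comp (chain e m n h) :=
  Nat.leRecOn_succ h _

theorem chain_succ_apply (n : ℕ) (x : F n) : chain e n (n + 1) n.le_succ x = e n x := by
  rw [chain_succ e le_rfl, chain_self]; rfl

instance : DirectedSystem F (chain e · · ·) where
  map_self n x := by rw [chain_self]; rfl
  map_map {k j i} hij hjk x := by
    induction k, hjk using Nat.le_induction with
    | base => rw [chain_self]; rfl
    | succ k hjk ih =>
      rw [chain_succ e hjk, chain_succ e (hij.trans hjk), comp_apply, comp_apply, ih]

theorem chain_injective (he : ∀ n, Function.Injective (e n)) {m n : ℕ} (h : m ≤ n) :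
    Function.Injective (chain e m n h) := by
  induction n, h using Nat.le_induction with
  | base => rw [chain_self]; exact Function.injective_id
  | succ n h ih => rw [chain_succ e h]; exact (he n).comp ih

end LatticeHom

namespace DirectLimit

open LatticeHom LatticeCon'

variable {F : ℕ → Type u} [∀ n, Lattice (F n)] (e : ∀ n, LatticeHom (F n) (F (n + 1)))

theorem latticeHom_chain_succ_apply (n : ℕ) (x : F n) :
    latticeHom (chain e) (n + 1) (e n x) = latticeHom (chain e) n x := by
  rw [latticeHom_apply, latticeHom_apply, ← chain_succ_apply]
  exact mk_apply ..

theorem latticeHom_chain_succ_comp (n : ℕ) :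
    (latticeHom (chain e) (n + 1)).comp (e n) = latticeHom (chain e) n :=
  LatticeHom.ext (latticeHom_chain_succ_apply e n)

theorem bijective_restrict_latticeHom_chain_zero
    (he : ∀ n, Function.Bijective (restrict (e n))) :
    Function.Bijective (restrict (latticeHom (chain e) 0)) := by
  refine ⟨fun Θ Ψ h => latticeCon_ext _ fun n => ?_, fun α => ?_⟩
  · induction n with
    | zero => exact h
    | succ n ih =>
      apply (he n).1
      rwa [← restrict_comp, ← restrict_comp, latticeHom_chain_succ_comp]
  · let Θ : ∀ n, LatticeCon' (F n) := fun n =>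
      Nat.rec α (fun n Θn => Function.surjInv (he n).2 Θn) n
    have hΘ : ∀ m n h, restrict (chain e m n h) (Θ n) = Θ m := by
      intro m n h
      induction n, h using Nat.le_induction with
      | base => rw [chain_self, restrict_id]
      | succ n h ih =>
        rw [chain_succ e h, restrict_comp, ← ih]
        exact congrArg _ (Function.surjInv_eq (he n).2 (Θ n))
    exact ⟨latticeCon _ Θ hΘ, restrict_latticeCon _ Θ hΘ 0⟩

theorem hasPairJoins_chain (he : ∀ n (a b c d : F n), ∃ x y : F (n + 1),
      ∀ Θ : LatticeCon' (F (n + 1)), Θ.r x y ↔ Θ.r (e n a) (e n b) ∧ Θ.r (e n c) (e n d)) :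
    HasPairJoins (DirectLimit F (chain e)) := by
  intro a b c d
  obtain ⟨i, a, b, rfl, rfl⟩ := exists_eq_mk₂ _ a b
  obtain ⟨j, c, d, rfl, rfl⟩ := exists_eq_mk₂ _ c d
  obtain ⟨n, hin, hjn⟩ := exists_ge_ge i j
  obtain ⟨x, y, hxy⟩ := he n (chain e i n hin a) (chain e i n hin b)
    (chain e j n hjn c) (chain e j n hjn d)
  refine ⟨latticeHom (chain e) (n + 1) x, latticeHom (chain e) (n + 1) y, fun Θ => ?_⟩
  have := hxy (restrict (latticeHom (chain e) (n + 1)) Θ)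
  simp only [restrict_r, latticeHom_chain_succ_apply] at this
  simpa only [latticeHom_apply, mk_apply] using this

end DirectLimit

namespace BoolTriple

variable (L : Type u) [Lattice L]

def closure : ClosureOperator (Fin 3 → L) :=
  .mk' (fun t i => (t i ⊔ t (i + 1)) ⊓ (t i ⊔ t (i + 2)))
    (fun s t hst i => inf_le_inf (sup_le_sup (hst i) (hst _)) (sup_le_sup (hst i) (hst _)))
    (fun t i => le_inf le_sup_left le_sup_left)
    (fun t i => by
      have h1 : i + 1 + 2 = i := by fin_cases i <;> rfl
      have h2 : i + 2 + 1 = i := by fin_cases i <;> rfl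
      refine inf_le_inf (sup_le inf_le_left (inf_le_right.trans ?_))
        (sup_le inf_le_right (inf_le_left.trans ?_))
      · rw [h1, sup_comm]
      · rw [h2, sup_comm])

end BoolTriple

/-- Schmidt's lattice `M₃⟨L⟩` of boolean triples of `L`. -/
abbrev BoolTriple (L : Type u) [Lattice L] : Type u := (BoolTriple.closure L).Closeds

namespace BoolTriple

variable {L : Type u} [Lattice L]

instance : Lattice (BoolTriple L) := (closure L).gi.liftLattice

theorem inf_val (x y : BoolTriple L) : (x ⊓ y).val = x.val ⊓ y.val := rfl

theorem sup_val (x y : BoolTriple L) : (x ⊔ y).val = closure L (x.val ⊔ y.val) := rfl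

theorem closure_apply (t : Fin 3 → L) (i : Fin 3) :
    closure L t i = (t i ⊔ t (i + 1)) ⊓ (t i ⊔ t (i + 2)) := rfl

theorem isClosed_iff {t : Fin 3 → L} :
    (closure L).IsClosed t ↔ ∀ i, (t i ⊔ t (i + 1)) ⊓ (t i ⊔ t (i + 2)) = t i :=
  (closure L).isClosed_iff.trans funext_iff

def diag : LatticeHom L (BoolTriple L) where
  toFun a := ⟨fun _ => a, isClosed_iff.2 fun _ => by simp⟩
  map_sup' a b := Subtype.ext <| funext fun _ => by simp [sup_val, closure_apply]
  map_inf' _ _ := rfl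

theorem diag_val (a : L) : (diag a).val = fun _ => a := rfl

theorem diag_injective : Function.Injective (diag : L → BoolTriple L) :=
  fun _ _ h => congrFun (congrArg Subtype.val h) 0

def single (i : Fin 3) {u v : L} (h : u ≤ v) : BoolTriple L :=
  ⟨Function.update (fun _ => u) i v, isClosed_iff.2 fun j => by
    fin_cases i <;> fin_cases j <;> simp [Function.update, h]⟩

theorem single_inf_sup_eq_diag (i : Fin 3) {u v : L} (h : u ≤ v) (t : BoolTriple L)
    (hu : ∀ k, u ≤ t.val k) (hv : ∀ k, t.val k ≤ v) :
    (t ⊓ single i h ⊔ single (i + 1) h) ⊓ (t ⊓ single i h ⊔ single (i + 2) h) =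
      diag (t.val i) := by
  apply Subtype.ext; funext k
  simp only [inf_val, sup_val, diag_val, closure_apply, single, Pi.inf_apply, Pi.sup_apply]
  fin_cases i <;> fin_cases k <;>
    simp [Function.update, sup_of_le_left, sup_of_le_right, inf_of_le_left, inf_of_le_right,
      h, hu, hv]

theorem diag_inf_single_val (k : Fin 3) {m c : L} (h : m ≤ c) {a : L} (hm : m ≤ a) (hc : a ≤ c) :
    (diag a ⊓ single k h).val = Function.update (fun _ => m) k a := by
  funext j
  rcases eq_or_ne j k with rfl | hjk
  · simp [inf_val, diag_val, single, hc]
  · simp [inf_val, diag_val, single, hjk, hm]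

theorem eq_sup_diag_inf_single (t : BoolTriple L) {m : L} {c : Fin 3 → L} (h : ∀ k, m ≤ c k)
    (hm : ∀ k, m ≤ t.val k) (hc : ∀ k, t.val k ≤ c k) :
    t = diag (t.val 0) ⊓ single 0 (h 0) ⊔ diag (t.val 1) ⊓ single 1 (h 1) ⊔
      diag (t.val 2) ⊓ single 2 (h 2) := by
  have hle : ∀ k, diag (t.val k) ⊓ single k (h k) ≤ t := fun k j => by
    rw [diag_inf_single_val k (h k) (hm k) (hc k)]
    rcases eq_or_ne j k with rfl | hjk
    · simp
    · simp [hjk, hm j]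
  refine le_antisymm (fun j => ?_) (sup_le (sup_le (hle 0) (hle 1)) (hle 2))
  have hjJ : diag (t.val j) ⊓ single j (h j) ≤ diag (t.val 0) ⊓ single 0 (h 0) ⊔
      diag (t.val 1) ⊓ single 1 (h 1) ⊔ diag (t.val 2) ⊓ single 2 (h 2) := by
    fin_cases j
    · exact le_sup_left.trans le_sup_left
    · exact le_sup_right.trans le_sup_left
    · exact le_sup_right
  have := hjJ j
  rwa [diag_inf_single_val j (h j) (hm j) (hc j), Function.update_self] at this

open Finset in
theorem rel_iff_forall_rel_diag (Θ : LatticeCon' (BoolTriple L)) {x y : BoolTriple L} :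
    Θ.r x y ↔ ∀ i, Θ.r (diag (x.val i)) (diag (y.val i)) := by
  set m := univ.inf' univ_nonempty (x.val ⊓ y.val)
  set c := x.val ⊔ y.val
  have hmx : ∀ k, m ≤ x.val k := fun k => (inf'_le _ (mem_univ k)).trans inf_le_left
  have hmy : ∀ k, m ≤ y.val k := fun k => (inf'_le _ (mem_univ k)).trans inf_le_right
  have hxc : ∀ k, x.val k ≤ c k := fun k => le_sup_left
  have hyc : ∀ k, y.val k ≤ c k := fun k => le_sup_right
  refine ⟨fun hxy i => ?_, fun h => ?_⟩
  · -- `t ↦ (t ⊓ sᵢ ⊔ sᵢ₊₁) ⊓ (t ⊓ sᵢ ⊔ sᵢ₊₂)` is a polynomial sending `t` to `diag (t i)`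
    set v := univ.sup' univ_nonempty c
    have hcv : ∀ k, c k ≤ v := fun k => le_sup' _ (mem_univ k)
    have hmv : m ≤ v := (hmx 0).trans ((hxc 0).trans (hcv 0))
    have hxy_i := Θ.inf_comp hxy (Θ.rel_refl (single i hmv))
    have hpoly := Θ.inf_comp (Θ.sup_comp hxy_i (Θ.rel_refl (single (i + 1) hmv)))
      (Θ.sup_comp hxy_i (Θ.rel_refl (single (i + 2) hmv)))
    rwa [single_inf_sup_eq_diag i hmv x hmx fun k => (hxc k).trans (hcv k),
      single_inf_sup_eq_diag i hmv y hmy fun k => (hyc k).trans (hcv k)] at hpoly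
  · have hmc : ∀ k, m ≤ c k := fun k => (hmx k).trans (hxc k)
    rw [eq_sup_diag_inf_single x hmc hmx hxc, eq_sup_diag_inf_single y hmc hmy hyc]
    exact Θ.sup_comp (Θ.sup_comp (Θ.inf_comp (h 0) (Θ.rel_refl _))
      (Θ.inf_comp (h 1) (Θ.rel_refl _))) (Θ.inf_comp (h 2) (Θ.rel_refl _))

def extendCon (α : LatticeCon' L) : LatticeCon' (BoolTriple L) where
  r x y := ∀ i, α.r (x.val i) (y.val i)
  iseqv :=
    { refl := fun _ _ => α.rel_refl _
      symm := fun h i => α.iseqv.symm (h i)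
      trans := fun h h' i => α.iseqv.trans (h i) (h' i) }
  sup_comp h h' i :=
    α.inf_comp (α.sup_comp (α.sup_comp (h i) (h' i)) (α.sup_comp (h _) (h' _)))
      (α.sup_comp (α.sup_comp (h i) (h' i)) (α.sup_comp (h _) (h' _)))
  inf_comp h h' i := α.inf_comp (h i) (h' i)

theorem restrict_diag_extendCon (α : LatticeCon' L) :
    LatticeCon'.restrict diag (extendCon α) = α :=
  LatticeCon'.ext' fun _ _ => ⟨fun h => h 0, fun h _ => h⟩

theorem bijective_restrict_diag :
    Function.Bijective (LatticeCon'.restrict (diag : LatticeHom L (BoolTriple L))) := by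
  refine ⟨fun Θ Ψ h => LatticeCon'.ext' fun x y => ?_,
    fun α => ⟨extendCon α, restrict_diag_extendCon α⟩⟩
  rw [rel_iff_forall_rel_diag, rel_iff_forall_rel_diag]
  exact forall_congr' fun i => Iff.of_eq (congrArg (fun Φ => Φ.r (x.val i) (y.val i)) h)

def pair (a c : L) : BoolTriple L :=
  ⟨![a, c, a ⊓ c], isClosed_iff.2 fun i => by fin_cases i <;> simp⟩

theorem rel_pair_iff (Θ : LatticeCon' (BoolTriple L)) (a b c d : L) :
    Θ.r (pair a c) (pair b d) ↔ Θ.r (diag a) (diag b) ∧ Θ.r (diag c) (diag d) := by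
  rw [rel_iff_forall_rel_diag]
  refine ⟨fun h => ⟨h 0, h 1⟩, fun ⟨hab, hcd⟩ i => ?_⟩
  fin_cases i
  · exact hab
  · exact hcd
  · simpa [pair, map_inf] using Θ.inf_comp hab hcd

end BoolTriple

def boolTripleTower (L : Type u) [Lattice L] : ℕ → Lat.{u}
  | 0 => Lat.of L
  | n + 1 => Lat.of (BoolTriple (boolTripleTower L n))

open LatticeCon' LatticeHom DirectLimit in
theorem exists_extension_hasPairJoins (L : Type u) [Lattice L] :
    ∃ (K : Type u) (_ : Lattice K) (_ : Nonempty K) (f : LatticeHom L K),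
      Function.Injective f ∧ Function.Bijective (restrict f) ∧ HasPairJoins K := by
  rcases isEmpty_or_nonempty L with hL | ⟨⟨a⟩⟩
  · exact ⟨PUnit, inferInstance, inferInstance, ⟨⟨fun _ => .unit, fun _ _ => rfl⟩, fun _ _ => rfl⟩,
      fun a => isEmptyElim a,
      ⟨Function.injective_of_subsingleton _, fun _ => ⟨⊥, Subsingleton.elim _ _⟩⟩,
      hasPairJoins_of_subsingleton⟩
  · let e n : LatticeHom (boolTripleTower L n) (boolTripleTower L (n + 1)) := BoolTriple.diag
    refine ⟨DirectLimit _ (chain e), inferInstance, ⟨latticeHom _ 0 a⟩,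
      (latticeHom (chain e) 0 : LatticeHom L _), ?_, ?_, ?_⟩
    · exact latticeHom_injective _
        (fun _ _ => chain_injective e fun _ => BoolTriple.diag_injective) 0
    · exact bijective_restrict_latticeHom_chain_zero e fun _ => BoolTriple.bijective_restrict_diag
    · exact hasPairJoins_chain e fun _ a b c d =>
        ⟨BoolTriple.pair a c, BoolTriple.pair b d, fun Θ => BoolTriple.rel_pair_iff Θ a b c d⟩

/-- **Theorem (Grätzer–Schmidt).** Every lattice `L` has a congruence-preserving
extension `K` (i.e. `L` is a sublattice of `K` and every congruence of `L` extends to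
exactly one congruence of `K`) in which every compact congruence is principal:
`Princ K = Conc K`. -/
theorem congruence_preserving_extension_with_principal_eq_compact
    (L : Type u) [Lattice L] :
    ∃ (K : Type u) (_ : Lattice K) (f : LatticeHom L K),
      Function.Injective f ∧
      (∀ α : LatticeCon' L, ∃! γ : LatticeCon' K, LatticeCon'.restrict f γ = α) ∧
      {γ : LatticeCon' K | γ.IsPrincipal} =
        {γ : LatticeCon' K | IsCompactElement γ} := by
  obtain ⟨K, _, _, f, hf, hres, hK⟩ := exists_extension_hasPairJoins L
  exact ⟨K, _, f, hf, hres.existsUnique,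
    Set.ext fun _ => LatticeCon'.isPrincipal_iff_isCompactElement hK⟩
end

section
/- Let K be a bounded lattice with bounds o and i such that every element x with o < x < i is contained in a sublattice A of K containing o and i with A isomorphic to the five-element modular nondistributive lattice M3. Then every congruence α of K that is distinct from the zero congruence and is not {o,i}-isolating (that is, α collapses o or i with some other element of K) equals the full congruence on K. -/
universe u v

/-- A congruence of a lattice: an equivalence relation compatible with join and meet. -/
structure LatticeCongr (L : Type u) [Lattice L] extends Setoid L where
  sup_comp : ∀ {a b c d : L}, r a b → r c d → r (a ⊔ c) (b ⊔ d)
  inf_comp : ∀ {a b c d : L}, r a b → r c d → r (a ⊓ c) (b ⊓ d)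

namespace LatticeCongr

variable {L : Type u} [Lattice L]

theorem ext' {c d : LatticeCongr L} (h : ∀ a b, c.r a b ↔ d.r a b) : c = d := by
  obtain ⟨cs, _, _⟩ := c
  obtain ⟨ds, _, _⟩ := d
  congr 1
  exact Setoid.ext h

/-- Congruences are ordered by inclusion of the underlying relations. -/
instance : PartialOrder (LatticeCongr L) where
  le c d := ∀ ⦃a b : L⦄, c.r a b → d.r a b
  le_refl c a b h := h
  le_trans c d e h1 h2 a b h := h2 (h1 h)
  le_antisymm c d h1 h2 := ext' fun a b => ⟨fun h => h1 h, fun h => h2 h⟩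

instance : InfSet (LatticeCongr L) where
  sInf S :=
    { r := fun a b => ∀ c ∈ S, c.r a b
      iseqv := ⟨fun a c _ => c.iseqv.refl a,
        fun h c hc => c.iseqv.symm (h c hc),
        fun h1 h2 c hc => c.iseqv.trans (h1 c hc) (h2 c hc)⟩
      sup_comp := fun h1 h2 c hc => c.sup_comp (h1 c hc) (h2 c hc)
      inf_comp := fun h1 h2 c hc => c.inf_comp (h1 c hc) (h2 c hc) }

/-- The congruence lattice `Con L`. -/
instance : CompleteLattice (LatticeCongr L) :=
  completeLatticeOfInf _ fun S =>
    ⟨fun c hc _ _ h => h c hc, fun c hc _ _ h d hd => hc hd h⟩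

/-- A congruence is principal if it is the smallest congruence collapsing some pair. -/
def IsPrincipal (α : LatticeCongr L) : Prop :=
  ∃ a b : L, α.r a b ∧ ∀ β : LatticeCongr L, β.r a b → α ≤ β

/-- `Princ L`: the order of principal congruences of `L`. -/
abbrev Princ (L : Type u) [Lattice L] := {α : LatticeCongr L // α.IsPrincipal}

/-- `Conc L`: the compact congruences of `L`. -/
abbrev Conc (L : Type u) [Lattice L] := {α : LatticeCongr L //
  ∀ s : Set (LatticeCongr L), α ≤ sSup s → ∃ t : Finset (LatticeCongr L), ↑t ⊆ s ∧ α ≤ t.sup id}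

end LatticeCongr

/-- The five-element modular nondistributive lattice `M₃` (the diamond): bottom, top and
three pairwise incomparable atoms. -/
inductive M3 : Type
  | bot | a | b | c | top
  deriving DecidableEq

instance : Fintype M3 :=
  ⟨{M3.bot, M3.a, M3.b, M3.c, M3.top}, fun x => by cases x <;> decide⟩

namespace M3

/-- The order of `M₃`. -/
def leB : M3 → M3 → Bool
  | bot, _ => true
  | _, top => true
  | x, y => x == y

instance : LE M3 := ⟨fun x y => leB x y = true⟩

instance : DecidableRel ((· ≤ ·) : M3 → M3 → Prop) := fun x y => inferInstanceAs (Decidable (leB x y = true))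

/-- Join in `M₃`. -/
def supFn : M3 → M3 → M3 := fun x y =>
  if leB x y then y else if leB y x then x else top

/-- Meet in `M₃`. -/
def infFn : M3 → M3 → M3 := fun x y =>
  if leB x y then x else if leB y x then y else bot

instance : Lattice M3 where
  le := (· ≤ ·)
  le_refl := by decide
  le_trans := by decide
  le_antisymm := by decide
  sup := supFn
  le_sup_left := by decide
  le_sup_right := by decide
  sup_le := by decide
  inf := infFn
  inf_le_left := by decide
  inf_le_right := by decide
  le_inf := by decide

end M3

/-!
Every `x` strictly between the bounds is an atom of a `{⊥, ⊤}`-sublattice `M₃`, so it has two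
further complements `y`, `z` that are complements of each other. If `⊥ ≡ x`, then
`y = y ⊔ ⊥ ≡ y ⊔ x = ⊤`, hence `⊥ = y ⊓ z ≡ ⊤ ⊓ z = z`, and finally `⊤ = x ⊔ z ≡ ⊥`;
the case `x ≡ ⊤` is dual. A congruence collapsing `⊥` and `⊤` collapses every `a = a ⊔ ⊥`
with `a ⊔ ⊤ = ⊤`.
-/

namespace M3

instance : BoundedOrder M3 where
  top := top
  le_top := by decide
  bot := bot
  bot_le := by decide

theorem exists_isCompl_triple (m : M3) (h0 : m ≠ ⊥) (h1 : m ≠ ⊤) :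
    ∃ m₁ m₂ : M3, IsCompl m m₁ ∧ IsCompl m₁ m₂ ∧ IsCompl m m₂ := by
  simp only [isCompl_iff, disjoint_iff, codisjoint_iff]
  revert m
  decide

end M3

namespace Sublattice

variable {K B : Type*} [Lattice K] [BoundedOrder K] [Lattice B] [BoundedOrder B]

def boundedLatticeHomOfOrderIso (A : Sublattice K) (hbot : ⊥ ∈ A) (htop : ⊤ ∈ A)
    (e : A ≃o B) : BoundedLatticeHom B K where
  toFun b := e.symm b
  map_sup' _ _ := by simp
  map_inf' _ _ := by simp
  map_top' := top_le_iff.1 (show (⟨⊤, htop⟩ : A) ≤ e.symm ⊤ from e.le_symm_apply.2 le_top)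
  map_bot' := le_bot_iff.1 (show e.symm ⊥ ≤ (⟨⊥, hbot⟩ : A) from e.symm_apply_le.2 bot_le)

theorem exists_isCompl_triple_of_orderIso_M3 {A : Sublattice K} (hbot : ⊥ ∈ A)
    (htop : ⊤ ∈ A) (e : A ≃o M3) {x : K} (hx : x ∈ A) (h0 : x ≠ ⊥) (h1 : x ≠ ⊤) :
    ∃ y z : K, IsCompl x y ∧ IsCompl y z ∧ IsCompl x z := by
  set f := A.boundedLatticeHomOfOrderIso hbot htop e
  have hfx : f (e ⟨x, hx⟩) = x := by simp [f, boundedLatticeHomOfOrderIso]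
  obtain ⟨m₁, m₂, h₀₁, h₁₂, h₀₂⟩ := M3.exists_isCompl_triple (e ⟨x, hx⟩)
    (fun h => h0 (by rw [← hfx, h, BotHomClass.map_bot]))
    (fun h => h1 (by rw [← hfx, h, TopHomClass.map_top]))
  exact ⟨f m₁, f m₂, hfx ▸ h₀₁.map f, h₁₂.map f, hfx ▸ h₀₂.map f⟩

end Sublattice

namespace LatticeCongr

variable {K : Type*} [Lattice K] [BoundedOrder K] (α : LatticeCongr K)

theorem eq_top_of_r_bot_top (h : α.r ⊥ ⊤) : α = ⊤ := by
  have r_top (a : K) : α.r a ⊤ := by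
    simpa using α.sup_comp (α.iseqv.refl a) h
  exact eq_top_iff.2 fun a b _ => α.iseqv.trans (r_top a) (α.iseqv.symm (r_top b))

theorem r_bot_top_of_isCompl_triple {x y z : K} (hxy : IsCompl x y) (hyz : IsCompl y z)
    (hxz : IsCompl x z) (h : α.r ⊥ x ∨ α.r x ⊤) : α.r ⊥ ⊤ := by
  rcases h with hx | hx
  · have hy : α.r y ⊤ := by
      simpa [sup_comm, hxy.sup_eq_top] using α.sup_comp (α.iseqv.refl y) hx
    have hz : α.r ⊥ z := by
      simpa [hyz.inf_eq_bot] using α.inf_comp hy (α.iseqv.refl z)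
    simpa [hxz.sup_eq_top] using α.sup_comp hx hz
  · have hy : α.r ⊥ y := by
      simpa [inf_comm, hxy.inf_eq_bot] using α.inf_comp (α.iseqv.refl y) hx
    have hz : α.r z ⊤ := by
      simpa [hyz.sup_eq_top] using α.sup_comp hy (α.iseqv.refl z)
    simpa [hxz.inf_eq_bot] using α.inf_comp hx hz

end LatticeCongr

theorem non_isolating_congruence_is_full_general
    (K : Type u) [Lattice K] [BoundedOrder K]
    (hM3 : ∀ x : K, ⊥ < x → x < ⊤ →
      ∃ A : Sublattice K, (⊥ : K) ∈ A ∧ (⊤ : K) ∈ A ∧ x ∈ A ∧ Nonempty (A ≃o M3))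
    (α : LatticeCongr K)
    (hcol : (∃ x : K, x ≠ ⊥ ∧ α.r (⊥ : K) x) ∨ (∃ x : K, x ≠ ⊤ ∧ α.r (⊤ : K) x)) :
    α = ⊤ := by
  refine α.eq_top_of_r_bot_top (by_contra fun hbt => ?_)
  obtain ⟨x, hx0, hx1, hr⟩ : ∃ x : K, x ≠ ⊥ ∧ x ≠ ⊤ ∧ (α.r ⊥ x ∨ α.r x ⊤) := by
    rcases hcol with ⟨x, hx0, hr⟩ | ⟨x, hx1, hr⟩
    · exact ⟨x, hx0, fun h => hbt (h ▸ hr), .inl hr⟩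
    · exact ⟨x, fun h => hbt (α.iseqv.symm (h ▸ hr)), hx1, .inr (α.iseqv.symm hr)⟩
  obtain ⟨A, hbot, htop, hxA, ⟨e⟩⟩ :=
    hM3 x (bot_lt_iff_ne_bot.2 hx0) (lt_top_iff_ne_top.2 hx1)
  obtain ⟨y, z, hxy, hyz, hxz⟩ :=
    Sublattice.exists_isCompl_triple_of_orderIso_M3 hbot htop e hxA hx0 hx1
  exact hbt (α.r_bot_top_of_isCompl_triple hxy hyz hxz hr)

/-- **Lemma.** Let `K` be a bounded lattice (bounds `o = ⊥`, `i = ⊤`) such that every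
element strictly between the bounds lies in a `{o,i}`-sublattice of `K` isomorphic
to `M₃`. Then every nonzero congruence `α` of `K` that is not `{o,i}`-isolating
(i.e. `α` collapses `o` or `i` with some other element) is the full congruence. -/
theorem non_isolating_congruence_is_full
    (K : Type u) [Lattice K] [BoundedOrder K]
    (hM3 : ∀ x : K, ⊥ < x → x < ⊤ →
      ∃ A : Sublattice K, (⊥ : K) ∈ A ∧ (⊤ : K) ∈ A ∧ x ∈ A ∧ Nonempty (A ≃o M3))
    (α : LatticeCongr K) (hne : α ≠ ⊥)
    (hcol : (∃ x : K, x ≠ ⊥ ∧ α.r (⊥ : K) x) ∨ (∃ x : K, x ≠ ⊤ ∧ α.r (⊤ : K) x)) :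
    α = ⊤ :=
  non_isolating_congruence_is_full_general K hM3 α hcol
end
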